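/- arXiv:1205.3548 — 5 statements merged into one kernel-verified Lean document; each statement's English description precedes it below -/
import Mathlib

section
/- Let p ≥ 2 and n ≥ 1. The dimension (over ℝ) of the space of harmonic homogeneous polynomials of degree n in p variables is N(p,n) = C(n+p−2, n) + C(n+p−3, n−1), and this equals ((2n+p−2)/n)·C(n+p−3, n−1). -/
/-!
The Laplacian maps the homogeneous polynomials `P_{m+2}` of degree `m + 2` onto `P_m`, so by
rank–nullity `dim H_n = dim P_n - dim P_{n-2}`, where `dim P_n = C(n+p-1, n)` counts monomials;
Pascal's rule turns this difference into `C(n+p-2, n) + C(n+p-3, n-1)`.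
Surjectivity comes from writing `r² = x₁² + ⋯ + x_p²`: for `g` homogeneous of degree `m`,
`Δ(r^{2(j+1)} g) = 2(j+1)(2m+2j+p) r^{2j} g + r^{2(j+1)} Δg`, and `Δg` has smaller degree, so
induction on `m` puts every `r^{2j} g` in the image of `P_{m+2j+2}`.
-/

open MvPolynomial

/-- The formal Laplace operator `Δ_p = Σ_{i=1}^p ∂²/∂x_i²` on polynomials in `p`
variables, as a linear map. -/
noncomputable def mvLaplacian (p : ℕ) :
    MvPolynomial (Fin p) ℝ →ₗ[ℝ] MvPolynomial (Fin p) ℝ :=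
  ∑ i : Fin p, ((pderiv i).toLinearMap.comp (pderiv i).toLinearMap)

namespace MvPolynomial

section Homogeneous

variable (σ R : Type*) [Fintype σ] [CommSemiring R]

theorem coe_finsuppAntidiag_eq_setOf_degree_eq [DecidableEq σ] (n : ℕ) :
    ((Finset.univ : Finset σ).finsuppAntidiag n : Set (σ →₀ ℕ)) = {d | d.degree = n} := by
  ext d
  simp [Finsupp.degree_eq_sum]

noncomputable def basisHomogeneousSubmodule [DecidableEq σ] (n : ℕ) :
    Module.Basis ((Finset.univ : Finset σ).finsuppAntidiag n) R (homogeneousSubmodule σ R n) :=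
  (basisRestrictSupport R _).map <| LinearEquiv.ofEq _ _ <| by
    rw [homogeneousSubmodule_eq_finsupp_supported, coe_finsuppAntidiag_eq_setOf_degree_eq]
    rfl

instance (n : ℕ) : Module.Finite R (homogeneousSubmodule σ R n) := by
  classical
  exact .of_basis (basisHomogeneousSubmodule σ R n)

end Homogeneous

theorem finrank_homogeneousSubmodule (σ R : Type*) [Fintype σ] [CommRing R] [Nontrivial R]
    (n : ℕ) :
    Module.finrank R (homogeneousSubmodule σ R n) = (Fintype.card σ + n - 1).choose n := by
  classical
  rw [Module.finrank_eq_card_basis (basisHomogeneousSubmodule σ R n), Fintype.card_coe,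
    Finset.card_finsuppAntidiag_nat_eq_choose, Finset.card_univ]

section Laplacian

variable {p : ℕ}

theorem mvLaplacian_apply (φ : MvPolynomial (Fin p) ℝ) :
    mvLaplacian p φ = ∑ i, pderiv i (pderiv i φ) := by
  simp [mvLaplacian, LinearMap.sum_apply]

protected theorem IsHomogeneous.mvLaplacian {φ : MvPolynomial (Fin p) ℝ} {n : ℕ}
    (h : φ.IsHomogeneous n) : (mvLaplacian p φ).IsHomogeneous (n - 2) := by
  rw [mvLaplacian_apply]
  exact IsHomogeneous.sum _ _ _ fun i _ ↦ h.pderiv.pderiv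

theorem IsHomogeneous.mvLaplacian_eq_zero {φ : MvPolynomial (Fin p) ℝ} {n : ℕ}
    (h : φ.IsHomogeneous n) (hn : n < 2) : mvLaplacian p φ = 0 := by
  rw [mvLaplacian_apply]
  refine Finset.sum_eq_zero fun i _ ↦ ?_
  have h0 : (pderiv i φ).IsHomogeneous 0 := by
    simpa [Nat.sub_eq_zero_of_le (by omega : n ≤ 1)] using h.pderiv
  rw [← totalDegree_zero_iff_isHomogeneous, totalDegree_eq_zero_iff_eq_C] at h0
  rw [h0, pderiv_C]

variable (p) in
noncomputable def radiusSq : MvPolynomial (Fin p) ℝ := ∑ i, X i ^ 2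

theorem isHomogeneous_radiusSq : (radiusSq p).IsHomogeneous 2 :=
  IsHomogeneous.sum _ _ _ fun i _ ↦ isHomogeneous_X_pow i 2

theorem pderiv_radiusSq (i : Fin p) : pderiv i (radiusSq p) = 2 * X i := by
  classical
  simp [radiusSq, pderiv_X, Pi.single_apply, mul_comm]

theorem mvLaplacian_radiusSq_mul {h : MvPolynomial (Fin p) ℝ} {d : ℕ} (hh : h.IsHomogeneous d) :
    mvLaplacian p (radiusSq p * h) =
      (2 * p + 4 * d : ℝ) • h + radiusSq p * mvLaplacian p h := by
  have hX : ∀ i : Fin p, pderiv i (2 * X i : MvPolynomial (Fin p) ℝ) = 2 := fun i ↦ by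
    have h2 : pderiv i (2 : MvPolynomial (Fin p) ℝ) = 0 := by
      exact_mod_cast (pderiv i).map_natCast 2
    simp [h2]
  have hterm : ∀ i : Fin p, pderiv i (pderiv i (radiusSq p * h)) =
      2 * h + 4 * (X i * pderiv i h) + radiusSq p * pderiv i (pderiv i h) := fun i ↦ by
    simp only [pderiv_mul, pderiv_radiusSq, map_add, hX]
    ring
  simp only [mvLaplacian_apply, hterm, Finset.sum_add_distrib, ← Finset.mul_sum,
    hh.sum_X_mul_pderiv, Finset.sum_const, Finset.card_univ, Fintype.card_fin, nsmul_eq_mul,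
    smul_eq_C_mul, map_add, map_mul, map_natCast, map_ofNat]
  ring

theorem mvLaplacian_radiusSq_pow_mul {h : MvPolynomial (Fin p) ℝ} {d : ℕ}
    (hh : h.IsHomogeneous d) (j : ℕ) : mvLaplacian p (radiusSq p ^ (j + 1) * h) =
      (2 * (j + 1) * (2 * d + 2 * j + p) : ℝ) • (radiusSq p ^ j * h) +
        radiusSq p ^ (j + 1) * mvLaplacian p h := by
  induction j with
  | zero =>
    rw [zero_add, pow_one, pow_zero, one_mul, mvLaplacian_radiusSq_mul hh]
    congr 2
    ring
  | succ j ih =>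
    have hdeg : (radiusSq p ^ (j + 1) * h).IsHomogeneous (2 * (j + 1) + d) :=
      (isHomogeneous_radiusSq.pow _).mul hh
    rw [pow_succ' _ (j + 1), mul_assoc, mvLaplacian_radiusSq_mul hdeg, ih]
    simp only [smul_eq_C_mul, map_add, map_mul, map_natCast, map_ofNat, map_one]
    push_cast
    ring

theorem radiusSq_pow_mul_mem_map_mvLaplacian (hp : 0 < p) {g : MvPolynomial (Fin p) ℝ} {m : ℕ}
    (hg : g.IsHomogeneous m) (j : ℕ) :
    radiusSq p ^ j * g ∈
      (homogeneousSubmodule (Fin p) ℝ (m + 2 * j + 2)).map (mvLaplacian p) := by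
  induction m using Nat.strong_induction_on generalizing g j with
  | _ m ih =>
  have hc : (2 * (j + 1) * (2 * m + 2 * j + p) : ℝ) ≠ 0 := by positivity
  have hlift : radiusSq p ^ (j + 1) * g ∈ homogeneousSubmodule (Fin p) ℝ (m + 2 * j + 2) := by
    rw [mem_homogeneousSubmodule, show m + 2 * j + 2 = 2 * (j + 1) + m by ring]
    exact (isHomogeneous_radiusSq.pow _).mul hg
  have hrest : radiusSq p ^ (j + 1) * mvLaplacian p g ∈
      (homogeneousSubmodule (Fin p) ℝ (m + 2 * j + 2)).map (mvLaplacian p) := by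
    rcases lt_or_ge m 2 with hm | hm
    · rw [hg.mvLaplacian_eq_zero hm, mul_zero]
      exact zero_mem _
    · convert ih (m - 2) (by omega) hg.mvLaplacian (j + 1) using 3
      omega
  have hsolve : radiusSq p ^ j * g = (2 * (j + 1) * (2 * m + 2 * j + p) : ℝ)⁻¹ •
      (mvLaplacian p (radiusSq p ^ (j + 1) * g) - radiusSq p ^ (j + 1) * mvLaplacian p g) := by
    rw [mvLaplacian_radiusSq_pow_mul hg, add_sub_cancel_right, smul_smul, inv_mul_cancel₀ hc,
      one_smul]
  rw [hsolve]
  exact Submodule.smul_mem _ _ (Submodule.sub_mem _ (Submodule.mem_map_of_mem hlift) hrest)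

theorem map_mvLaplacian_homogeneousSubmodule (hp : 0 < p) (m : ℕ) :
    (homogeneousSubmodule (Fin p) ℝ (m + 2)).map (mvLaplacian p) =
      homogeneousSubmodule (Fin p) ℝ m := by
  refine le_antisymm ?_ fun g hg ↦ by simpa using radiusSq_pow_mul_mem_map_mvLaplacian hp hg 0
  rw [Submodule.map_le_iff_le_comap]
  intro φ hφ
  exact hφ.mvLaplacian

theorem finrank_homogeneousSubmodule_inf_ker_mvLaplacian_add_finrank (hp : 0 < p) (m : ℕ) :
    Module.finrank ℝ
        ↥(homogeneousSubmodule (Fin p) ℝ (m + 2) ⊓ LinearMap.ker (mvLaplacian p)) +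
        Module.finrank ℝ (homogeneousSubmodule (Fin p) ℝ m) =
      Module.finrank ℝ (homogeneousSubmodule (Fin p) ℝ (m + 2)) := by
  set P := homogeneousSubmodule (Fin p) ℝ (m + 2)
  have hker : Module.finrank ℝ ↥(P ⊓ LinearMap.ker (mvLaplacian p)) =
      Module.finrank ℝ (LinearMap.ker ((mvLaplacian p).domRestrict P)) := by
    rw [LinearMap.ker_domRestrict, ← Submodule.map_comap_subtype]
    exact (Submodule.equivMapOfInjective _ P.injective_subtype _).finrank_eq.symm
  rw [hker, ← map_mvLaplacian_homogeneousSubmodule hp m, ← LinearMap.range_domRestrict,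
    add_comm]
  exact LinearMap.finrank_range_add_finrank_ker _

theorem homogeneousSubmodule_one_le_ker_mvLaplacian :
    homogeneousSubmodule (Fin p) ℝ 1 ≤ LinearMap.ker (mvLaplacian p) :=
  fun _ hφ ↦ hφ.mvLaplacian_eq_zero one_lt_two

theorem finrank_homogeneousSubmodule_inf_ker_mvLaplacian {n : ℕ} (hp : 2 ≤ p) (hn : 1 ≤ n) :
    Module.finrank ℝ ↥(homogeneousSubmodule (Fin p) ℝ n ⊓ LinearMap.ker (mvLaplacian p)) =
      (n + p - 2).choose n + (n + p - 3).choose (n - 1) := by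
  obtain ⟨q, rfl⟩ : ∃ q, p = q + 2 := ⟨p - 2, by omega⟩
  rcases hn.eq_or_lt with rfl | hn
  · rw [inf_eq_left.mpr homogeneousSubmodule_one_le_ker_mvLaplacian,
      finrank_homogeneousSubmodule, Fintype.card_fin]
    simp only [Nat.add_sub_cancel, Nat.sub_self, Nat.choose_one_right, Nat.choose_zero_right]
    omega
  · obtain ⟨m, rfl⟩ : ∃ m, n = m + 2 := ⟨n - 2, by omega⟩
    have h :=
      finrank_homogeneousSubmodule_inf_ker_mvLaplacian_add_finrank (by omega : 0 < q + 2) m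
    simp only [finrank_homogeneousSubmodule, Fintype.card_fin] at h
    rw [show q + 2 + (m + 2) - 1 = m + q + 3 by omega, Nat.choose_succ_succ',
      Nat.choose_succ_succ', show q + 2 + m - 1 = m + q + 1 by omega,
      show m + 1 + 1 = m + 2 from rfl] at h
    rw [show m + 2 + (q + 2) - 2 = m + q + 2 by omega,
      show m + 2 + (q + 2) - 3 = m + q + 1 by omega, show m + 2 - 1 = m + 1 by omega]
    omega

end Laplacian

end MvPolynomial

/-- For `p ≥ 2` and `n ≥ 1`, the dimension over `ℝ` of the space of
harmonic homogeneous polynomials of degree `n` in `p` variables is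
`N(p,n) = C(n+p−2, n) + C(n+p−3, n−1)`, which equals `((2n+p−2)/n)·C(n+p−3, n−1)`. -/
theorem finrank_harmonic_homogeneous_polynomials
    (p n : ℕ) (hp : 2 ≤ p) (hn : 1 ≤ n) :
    Module.finrank ℝ
        ↥(MvPolynomial.homogeneousSubmodule (Fin p) ℝ n ⊓ LinearMap.ker (mvLaplacian p)) =
        Nat.choose (n + p - 2) n + Nat.choose (n + p - 3) (n - 1) ∧
      (Module.finrank ℝ
          ↥(MvPolynomial.homogeneousSubmodule (Fin p) ℝ n ⊓ LinearMap.ker (mvLaplacian p)) : ℚ) =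
        ((2 * n + p - 2 : ℚ) / (n : ℚ)) * (Nat.choose (n + p - 3) (n - 1) : ℚ) := by
  have hdim := finrank_homogeneousSubmodule_inf_ker_mvLaplacian hp hn
  refine ⟨hdim, ?_⟩
  obtain ⟨q, rfl⟩ : ∃ q, p = q + 2 := ⟨p - 2, by omega⟩
  obtain ⟨m, rfl⟩ : ∃ m, n = m + 1 := ⟨n - 1, by omega⟩
  rw [hdim, show m + 1 + (q + 2) - 2 = m + q + 1 by omega,
    show m + 1 + (q + 2) - 3 = m + q by omega, Nat.add_sub_cancel]
  have hpascal : ((m + q + 1 : ℕ) : ℚ) * (m + q).choose m =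
      (m + q + 1).choose (m + 1) * (m + 1 : ℕ) := by
    exact_mod_cast Nat.add_one_mul_choose_eq (m + q) m
  rw [div_mul_eq_mul_div, eq_div_iff (by positivity)]
  push_cast at hpascal ⊢
  linear_combination -hpascal
end

section
/- Let α, β > −1 and let w(x) = (1−x)^α (1+x)^β on (−1,1). For each n ∈ ℕ define ψ_n(x) = (1/w(x))·(d/dx)^n [w(x)(1−x²)^n] for x ∈ (−1,1). Then there exists a real polynomial q_n of degree exactly n such that ψ_n(x) = q_n(x) for all x ∈ (−1,1). -/
/-!
On `(-1, 1)` we have `w(x) (1 - x²)ⁿ = (1 - x)^(α + n) (1 + x)^(β + n)`. Differentiating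
`(1 - x)^A (1 + x)^B p(x)` for a polynomial `p` of degree at most `d` gives
`(1 - x)^(A - 1) (1 + x)^(B - 1) p₁(x)` with `p₁` of degree at most `d + 1` and
`[x^(d+1)] p₁ = -(A + B + d) [x^d] p`. Hence the `k`-th derivative of `(1 - x)^A (1 + x)^B` is
`(1 - x)^(A - k) (1 + x)^(B - k) P_k(x)` where `[x^k] P_k = ∏_{i < k} -(A + B - i)`. For
`A = α + n`, `B = β + n`, `k = n` the weight cancels, and every factor `α + β + 2n - i` with
`i < n` is positive because `α + β > -2`.
-/

/-- The Jacobi weight `w(x) = (1−x)^α (1+x)^β` (real powers). -/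
noncomputable def jacobiWeight (α β : ℝ) (x : ℝ) : ℝ :=
  (1 - x) ^ α * (1 + x) ^ β

/-- The Rodrigues expression `ψ_n(x) = (1/w(x)) (d/dx)^n [w(x)(1−x²)^n]`. -/
noncomputable def rodrigues (α β : ℝ) (n : ℕ) (x : ℝ) : ℝ :=
  (1 / jacobiWeight α β x) *
    iteratedDeriv n (fun y => jacobiWeight α β y * (1 - y ^ 2) ^ n) x

open Polynomial Set

/-- The polynomial `q` with `(d/dx) [(1 - x)^A (1 + x)^B p] = (1 - x)^(A - 1) (1 + x)^(B - 1) q`. -/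
noncomputable def rodriguesStep (A B : ℝ) (p : ℝ[X]) : ℝ[X] :=
  (C (-A) * (1 + X) + C B * (1 - X)) * p + (1 - X) * (1 + X) * derivative p

noncomputable def rodriguesPoly (A B : ℝ) : ℕ → ℝ[X]
  | 0 => 1
  | k + 1 => rodriguesStep (A - k) (B - k) (rodriguesPoly A B k)

section Step

variable (A B : ℝ) {p : ℝ[X]} {d : ℕ}

lemma natDegree_rodriguesStep_le (hp : p.natDegree ≤ d) :
    (rodriguesStep A B p).natDegree ≤ d + 1 := by
  have hlin : (C (-A) * (1 + X) + C B * (1 - X) : ℝ[X]).natDegree ≤ 1 := by compute_degree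
  have hquad : ((1 - X) * (1 + X) : ℝ[X]).natDegree ≤ 2 := by compute_degree
  refine natDegree_add_le_of_degree_le ((natDegree_mul_le_of_le hlin hp).trans_eq (add_comm 1 d)) ?_
  rcases eq_or_ne p.natDegree 0 with hp0 | hp0
  · simp [derivative_of_natDegree_zero hp0]
  · have hder : (derivative p).natDegree + 1 ≤ d := (natDegree_derivative_lt hp0).trans_le hp
    exact (natDegree_mul_le_of_le hquad le_rfl).trans (by omega)

lemma coeff_rodriguesStep (hp : p.natDegree ≤ d) :
    (rodriguesStep A B p).coeff (d + 1) = -(A + B + d) * p.coeff d := by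
  have hp1 : p.coeff (d + 1) = 0 := coeff_eq_zero_of_natDegree_lt (by omega)
  have hp2 : p.coeff (d + 2) = 0 := coeff_eq_zero_of_natDegree_lt (by omega)
  have hX2 : (X ^ 2 * derivative p).coeff (d + 1) = d * p.coeff d := by
    rcases d with _ | d
    · simp [coeff_X_pow_mul']
    · rw [show d + 1 + 1 = d + 2 by omega, coeff_X_pow_mul, coeff_derivative]
      push_cast
      ring
  have hexpand : rodriguesStep A B p = C (-A + B) * p + C (-A - B) * (X * p)
      + derivative p - X ^ 2 * derivative p := by
    simp only [rodriguesStep, C_add, C_sub, C_neg]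
    ring
  rw [hexpand]
  simp only [coeff_add, coeff_sub, coeff_C_mul, coeff_X_mul, coeff_derivative, hp1, hp2, hX2]
  ring

end Step

lemma natDegree_rodriguesPoly_le (A B : ℝ) (k : ℕ) : (rodriguesPoly A B k).natDegree ≤ k := by
  induction k with
  | zero => simp [rodriguesPoly]
  | succ k ih => exact natDegree_rodriguesStep_le _ _ ih

lemma coeff_rodriguesPoly_self (A B : ℝ) (k : ℕ) :
    (rodriguesPoly A B k).coeff k = ∏ i ∈ Finset.range k, -(A + B - i) := by
  induction k with
  | zero => simp [rodriguesPoly]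
  | succ k ih =>
    rw [rodriguesPoly, coeff_rodriguesStep _ _ (natDegree_rodriguesPoly_le A B k), ih,
      Finset.prod_range_succ]
    ring

lemma degree_rodriguesPoly (A B : ℝ) (k : ℕ) (h : ∀ i < k, (i : ℝ) ≠ A + B) :
    (rodriguesPoly A B k).degree = k := by
  refine degree_eq_of_le_of_coeff_ne_zero
    (natDegree_le_iff_degree_le.mp (natDegree_rodriguesPoly_le A B k)) ?_
  rw [coeff_rodriguesPoly_self, Finset.prod_ne_zero_iff]
  intro i hi
  exact neg_ne_zero.mpr (sub_ne_zero.mpr (h i (Finset.mem_range.mp hi)).symm)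

lemma jacobiWeight_pos (α β : ℝ) {x : ℝ} (hx : x ∈ Ioo (-1) 1) : 0 < jacobiWeight α β x :=
  mul_pos (Real.rpow_pos_of_pos (by linarith [hx.2]) α)
    (Real.rpow_pos_of_pos (by linarith [hx.1]) β)

lemma hasDerivAt_rpow_mul_rpow_mul_eval (A B : ℝ) (p : ℝ[X]) {x : ℝ} (hx : x ∈ Ioo (-1) 1) :
    HasDerivAt (fun y => (1 - y) ^ A * (1 + y) ^ B * p.eval y)
      ((1 - x) ^ (A - 1) * (1 + x) ^ (B - 1) * (rodriguesStep A B p).eval x) x := by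
  have hm : 0 < 1 - x := by linarith [hx.2]
  have hp : 0 < 1 + x := by linarith [hx.1]
  have hA : HasDerivAt (fun y : ℝ => (1 - y) ^ A) (-1 * A * (1 - x) ^ (A - 1)) x :=
    ((hasDerivAt_id x).const_sub 1).rpow_const (Or.inl hm.ne')
  have hB : HasDerivAt (fun y : ℝ => (1 + y) ^ B) (1 * B * (1 + x) ^ (B - 1)) x :=
    ((hasDerivAt_id x).const_add 1).rpow_const (Or.inl hp.ne')
  refine ((hA.fun_mul hB).fun_mul (p.hasDerivAt x)).congr_deriv ?_
  rw [show (1 - x) ^ A = (1 - x) ^ (A - 1) * (1 - x) by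
      rw [← Real.rpow_add_one hm.ne', sub_add_cancel],
    show (1 + x) ^ B = (1 + x) ^ (B - 1) * (1 + x) by
      rw [← Real.rpow_add_one hp.ne', sub_add_cancel]]
  simp only [rodriguesStep, eval_add, eval_mul, eval_sub, eval_one, eval_X, eval_C]
  ring

lemma iteratedDeriv_rpow_mul_rpow (A B : ℝ) (k : ℕ) :
    EqOn (iteratedDeriv k fun y => (1 - y) ^ A * (1 + y) ^ B)
      (fun y => (1 - y) ^ (A - k) * (1 + y) ^ (B - k) * (rodriguesPoly A B k).eval y)
      (Ioo (-1) 1) := by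
  induction k with
  | zero => intro x _; simp [rodriguesPoly]
  | succ k ih =>
    intro x hx
    have hloc := Filter.eventuallyEq_of_mem (isOpen_Ioo.mem_nhds hx) ih
    rw [iteratedDeriv_succ, hloc.deriv_eq,
      (hasDerivAt_rpow_mul_rpow_mul_eval _ _ _ hx).deriv, rodriguesPoly]
    simp only [Nat.cast_succ, sub_add_eq_sub_sub]

lemma jacobiWeight_mul_one_sub_sq_pow (α β : ℝ) (n : ℕ) {x : ℝ} (hx : x ∈ Ioo (-1) 1) :
    jacobiWeight α β x * (1 - x ^ 2) ^ n = (1 - x) ^ (α + n) * (1 + x) ^ (β + n) := by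
  have hm : 0 < 1 - x := by linarith [hx.2]
  have hp : 0 < 1 + x := by linarith [hx.1]
  rw [jacobiWeight, Real.rpow_add_natCast hm.ne', Real.rpow_add_natCast hp.ne',
    show 1 - x ^ 2 = (1 - x) * (1 + x) by ring, mul_pow]
  ring

/-- For `α, β > −1`, the Rodrigues formula
`ψ_n(x) = (1/w(x)) (d/dx)^n [w(x)(1−x²)^n]` with `w(x) = (1−x)^α (1+x)^β` defines,
on `(−1,1)`, a polynomial of degree exactly `n`. -/
theorem rodrigues_is_polynomial
    (α β : ℝ) (hα : -1 < α) (hβ : -1 < β) (n : ℕ) :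
    ∃ q : Polynomial ℝ, q.degree = n ∧
      ∀ x ∈ Set.Ioo (-1 : ℝ) 1, rodrigues α β n x = q.eval x := by
  refine ⟨rodriguesPoly (α + n) (β + n) n, ?_, fun x hx => ?_⟩
  · refine degree_rodriguesPoly _ _ n fun i hi => ?_
    have : (i : ℝ) + 1 ≤ n := by exact_mod_cast hi
    linarith
  · have hloc : (fun y => jacobiWeight α β y * (1 - y ^ 2) ^ n)
        =ᶠ[nhds x] fun y => (1 - y) ^ (α + n) * (1 + y) ^ (β + n) :=
      Filter.eventuallyEq_of_mem (isOpen_Ioo.mem_nhds hx)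
        fun y hy => jacobiWeight_mul_one_sub_sq_pow α β n hy
    rw [rodrigues, hloc.iteratedDeriv_eq, iteratedDeriv_rpow_mul_rpow _ _ n hx,
      add_sub_cancel_right, add_sub_cancel_right, one_div]
    exact inv_mul_cancel_left₀ (jacobiWeight_pos α β hx).ne' _
end

section
/- Let α, β > −1, let w(x) = (1−x)^α (1+x)^β on (−1,1), and for n ∈ ℕ define ψ_n(x) = (1/w(x))·(d/dx)^n [w(x)(1−x²)^n]. Then for every natural number k with 0 ≤ k < n, ∫_{−1}^1 ψ_n(x) x^k w(x) dx = 0. -/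
open MeasureTheory

/-!
Write `F(x) = w(x)(1 - x²)^n = (1 - x)^(α+n) (1 + x)^(β+n)`. Each derivative lowers both
exponents by one, so on `(-1, 1)` we have `F^(j) = (1 - x)^(α+n-j) (1 + x)^(β+n-j) p_j` with `p_j`
a polynomial. In particular `ψ_n w = F^(n)` is `w` times a polynomial, hence integrable, and for
`j < n` both exponents are positive, so `F^(j)` tends to `0` at `±1`. Integrating `x^k F^(n)` by
parts `n` times therefore leaves no boundary terms, and the last integrand contains `(x^k)^(n) = 0`:
in closed form, `∑_{i<n} (-1)^i (x^k)^(i) F^(n-1-i)` is an antiderivative of `x^k F^(n)` on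
`(-1, 1)` with limit `0` at both ends.
-/

open Polynomial Set Filter Topology

noncomputable def weightedPoly (a b : ℝ) (p : ℝ[X]) (x : ℝ) : ℝ :=
  jacobiWeight a b x * p.eval x

noncomputable def weightedPolyDeriv (a b : ℝ) (p : ℝ[X]) : ℝ[X] :=
  (C b * (1 - X) - C a * (1 + X)) * p + (1 - X ^ 2) * derivative p

section weightedPoly

variable {a b : ℝ}

theorem hasDerivAt_weightedPoly (p : ℝ[X]) {x : ℝ} (hx : x ∈ Ioo (-1 : ℝ) 1) :
    HasDerivAt (weightedPoly a b p)
      (weightedPoly (a - 1) (b - 1) (weightedPolyDeriv a b p) x) x := by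
  have hx₁ : 0 < 1 - x := by linarith [hx.2]
  have hx₂ : 0 < 1 + x := by linarith [hx.1]
  have hu : HasDerivAt (fun y : ℝ => (1 - y) ^ a) (a * (1 - x) ^ (a - 1) * (-1)) x :=
    (Real.hasDerivAt_rpow_const (Or.inl hx₁.ne')).comp x ((hasDerivAt_id x).const_sub 1)
  have hv : HasDerivAt (fun y : ℝ => (1 + y) ^ b) (b * (1 + x) ^ (b - 1) * 1) x :=
    (Real.hasDerivAt_rpow_const (Or.inl hx₂.ne')).comp x ((hasDerivAt_id x).const_add 1)
  refine ((hu.fun_mul hv).fun_mul (p.hasDerivAt x)).congr_deriv ?_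
  rw [weightedPoly, jacobiWeight, Real.rpow_sub_one hx₁.ne', Real.rpow_sub_one hx₂.ne']
  simp only [weightedPolyDeriv, eval_add, eval_mul, eval_sub, eval_C, eval_one, eval_X, eval_pow]
  field_simp
  ring

theorem exists_eqOn_iteratedDeriv_weightedPoly (p : ℝ[X]) (j : ℕ) :
    ∃ q : ℝ[X], EqOn (iteratedDeriv j (weightedPoly a b p))
      (weightedPoly (a - j) (b - j) q) (Ioo (-1) 1) := by
  induction j with
  | zero => exact ⟨p, by simp [EqOn]⟩
  | succ j ih =>
    obtain ⟨q, hq⟩ := ih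
    refine ⟨weightedPolyDeriv (a - j) (b - j) q, fun x hx => ?_⟩
    have hloc := hq.eventuallyEq_of_mem (isOpen_Ioo.mem_nhds hx)
    rw [iteratedDeriv_succ, hloc.deriv_eq, (hasDerivAt_weightedPoly q hx).deriv]
    push_cast
    rw [sub_sub, sub_sub]

theorem differentiableAt_iteratedDeriv_weightedPoly (p : ℝ[X]) (j : ℕ) {x : ℝ}
    (hx : x ∈ Ioo (-1 : ℝ) 1) :
    DifferentiableAt ℝ (iteratedDeriv j (weightedPoly a b p)) x := by
  obtain ⟨q, hq⟩ := exists_eqOn_iteratedDeriv_weightedPoly (a := a) (b := b) p j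
  exact ((hasDerivAt_weightedPoly q hx).congr_of_eventuallyEq
    (hq.eventuallyEq_of_mem (isOpen_Ioo.mem_nhds hx))).differentiableAt

theorem tendsto_weightedPoly_one (ha : 0 < a) (p : ℝ[X]) :
    Tendsto (weightedPoly a b p) (𝓝 1) (𝓝 0) := by
  have hcont : ContinuousAt (weightedPoly a b p) 1 := by
    refine ((ContinuousAt.rpow_const ?_ (Or.inr ha.le)).mul
      (ContinuousAt.rpow_const ?_ (Or.inl (by norm_num)))).mul p.continuousAt <;> fun_prop
  simpa [weightedPoly, jacobiWeight, Real.zero_rpow ha.ne'] using hcont.tendsto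

theorem tendsto_weightedPoly_neg_one (hb : 0 < b) (p : ℝ[X]) :
    Tendsto (weightedPoly a b p) (𝓝 (-1)) (𝓝 0) := by
  have hcont : ContinuousAt (weightedPoly a b p) (-1) := by
    refine ((ContinuousAt.rpow_const ?_ (Or.inl (by norm_num))).mul
      (ContinuousAt.rpow_const ?_ (Or.inr hb.le))).mul p.continuousAt <;> fun_prop
  simpa [weightedPoly, jacobiWeight, Real.zero_rpow hb.ne'] using hcont.tendsto

theorem tendsto_iteratedDeriv_weightedPoly_nhdsLT_one {j : ℕ} (hj : (j : ℝ) < a) (p : ℝ[X]) :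
    Tendsto (iteratedDeriv j (weightedPoly a b p)) (𝓝[<] 1) (𝓝 0) := by
  obtain ⟨q, hq⟩ := exists_eqOn_iteratedDeriv_weightedPoly (a := a) (b := b) p j
  exact ((tendsto_weightedPoly_one (sub_pos.2 hj) q).mono_left nhdsWithin_le_nhds).congr'
    (hq.symm.eventuallyEq_of_mem (Ioo_mem_nhdsLT (by norm_num)))

theorem tendsto_iteratedDeriv_weightedPoly_nhdsGT_neg_one {j : ℕ} (hj : (j : ℝ) < b)
    (p : ℝ[X]) : Tendsto (iteratedDeriv j (weightedPoly a b p)) (𝓝[>] (-1)) (𝓝 0) := by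
  obtain ⟨q, hq⟩ := exists_eqOn_iteratedDeriv_weightedPoly (a := a) (b := b) p j
  exact ((tendsto_weightedPoly_neg_one (sub_pos.2 hj) q).mono_left nhdsWithin_le_nhds).congr'
    (hq.symm.eventuallyEq_of_mem (Ioo_mem_nhdsGT (by norm_num)))

theorem integrableOn_weightedPoly (ha : -1 < a) (hb : -1 < b) (p : ℝ[X]) :
    IntegrableOn (weightedPoly a b p) (Ioo (-1) 1) := by
  have hleft : IntervalIntegrable (weightedPoly a b p) volume (-1) 0 := by
    have h := (intervalIntegral.intervalIntegrable_rpow' hb (a := 0) (b := 1)).comp_add_right 1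
    norm_num at h
    convert h.continuousOn_mul (g := fun x => (1 - x) ^ a * p.eval x) ?_ using 1
    · ext x
      simp only [weightedPoly, jacobiWeight, add_comm x]
      ring
    · rw [uIcc_of_le (by norm_num)]
      refine ContinuousOn.mul (ContinuousOn.rpow_const (by fun_prop) fun x hx => ?_)
        p.continuousOn
      exact Or.inl (by linarith [hx.2])
  have hright : IntervalIntegrable (weightedPoly a b p) volume 0 1 := by
    have h := (intervalIntegral.intervalIntegrable_rpow' ha (a := 1) (b := 0)).comp_sub_left 1
    norm_num at h
    convert h.continuousOn_mul (g := fun x => (1 + x) ^ b * p.eval x) ?_ using 1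
    · ext x
      simp only [weightedPoly, jacobiWeight]
      ring
    · rw [uIcc_of_le (by norm_num)]
      refine ContinuousOn.mul (ContinuousOn.rpow_const (by fun_prop) fun x hx => ?_)
        p.continuousOn
      exact Or.inl (by linarith [hx.1])
  exact (intervalIntegrable_iff_integrableOn_Ioo_of_le (by norm_num)).1 (hleft.trans hright)

end weightedPoly

section integrationByParts

variable {f : ℝ → ℝ} {n : ℕ} {q : ℝ[X]}

theorem hasDerivAt_sum_eval_derivative_iterate_mul_iteratedDeriv (hq : q.natDegree < n) {x : ℝ}
    (hf : ∀ j < n, DifferentiableAt ℝ (iteratedDeriv j f) x) :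
    HasDerivAt (fun y => ∑ i ∈ Finset.range n,
        (-1) ^ i * (derivative^[i] q).eval y * iteratedDeriv (n - 1 - i) f y)
      (q.eval x * iteratedDeriv n f x) x := by
  set T : ℕ → ℝ := fun i => (-1) ^ i * (derivative^[i] q).eval x * iteratedDeriv (n - i) f x
  have hterm : ∀ i ∈ Finset.range n,
      HasDerivAt (fun y => (-1) ^ i * (derivative^[i] q).eval y * iteratedDeriv (n - 1 - i) f y)
        (T i - T (i + 1)) x := by
    intro i hi
    have hi : i < n := Finset.mem_range.1 hi
    have hF : HasDerivAt (iteratedDeriv (n - 1 - i) f) (iteratedDeriv (n - i) f x) x := by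
      rw [show n - i = n - 1 - i + 1 by omega, iteratedDeriv_succ]
      exact (hf _ (by omega)).hasDerivAt
    have hP := ((derivative^[i] q).hasDerivAt x).const_mul ((-1 : ℝ) ^ i)
    refine (hP.fun_mul hF).congr_deriv ?_
    simp only [T]
    rw [Function.iterate_succ_apply', show n - (i + 1) = n - 1 - i by omega, pow_succ]
    ring
  have hTn : T n = 0 := by
    simp [T, iterate_derivative_eq_zero hq]
  refine (HasDerivAt.fun_sum hterm).congr_deriv ?_
  rw [Finset.sum_range_sub', hTn, sub_zero]
  simp [T]

theorem setIntegral_Ioo_eval_mul_iteratedDeriv_eq_zero {a b : ℝ} (hab : a < b)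
    (hq : q.natDegree < n)
    (hf : ∀ j < n, ∀ x ∈ Ioo a b, DifferentiableAt ℝ (iteratedDeriv j f) x)
    (ha : ∀ j < n, Tendsto (iteratedDeriv j f) (𝓝[>] a) (𝓝 0))
    (hb : ∀ j < n, Tendsto (iteratedDeriv j f) (𝓝[<] b) (𝓝 0))
    (hint : IntegrableOn (fun x => q.eval x * iteratedDeriv n f x) (Ioo a b)) :
    ∫ x in Ioo a b, q.eval x * iteratedDeriv n f x = 0 := by
  have hlim : ∀ (l : Filter ℝ) (c : ℝ), l ≤ 𝓝 c →
      (∀ j < n, Tendsto (iteratedDeriv j f) l (𝓝 0)) →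
      Tendsto (fun y => ∑ i ∈ Finset.range n,
        (-1) ^ i * (derivative^[i] q).eval y * iteratedDeriv (n - 1 - i) f y) l (𝓝 0) := by
    intro l c hl hlim
    simpa using tendsto_finsetSum (Finset.range n) fun i hi =>
      ((((derivative^[i] q).continuous.const_mul ((-1 : ℝ) ^ i)).tendsto c).mono_left hl).mul
        (hlim (n - 1 - i) (by simp at hi; omega))
  rw [← integral_Ioc_eq_integral_Ioo, ← intervalIntegral.integral_of_le hab.le,
    intervalIntegral.integral_eq_sub_of_hasDerivAt_of_tendsto hab
      (fun x hx => hasDerivAt_sum_eval_derivative_iterate_mul_iteratedDeriv hq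
        fun j hj => hf j hj x hx)
      ((intervalIntegrable_iff_integrableOn_Ioo_of_le hab.le).2 hint)
      (hlim _ a nhdsWithin_le_nhds ha) (hlim _ b nhdsWithin_le_nhds hb), sub_self]

end integrationByParts

theorem eqOn_jacobiWeight_mul_one_sub_sq_pow (α β : ℝ) (n : ℕ) :
    EqOn (fun y => jacobiWeight α β y * (1 - y ^ 2) ^ n) (weightedPoly (α + n) (β + n) 1)
      (Ioo (-1) 1) := by
  intro x hx
  have hx₁ : 0 < 1 - x := by linarith [hx.2]
  have hx₂ : 0 < 1 + x := by linarith [hx.1]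
  simp only [weightedPoly, jacobiWeight, eval_one, mul_one, Real.rpow_add hx₁,
    Real.rpow_add hx₂, Real.rpow_natCast, show 1 - x ^ 2 = (1 - x) * (1 + x) by ring, mul_pow]
  ring

theorem rodrigues_mul_jacobiWeight {α β : ℝ} (n : ℕ) {x : ℝ} (hx : x ∈ Ioo (-1 : ℝ) 1) :
    rodrigues α β n x * jacobiWeight α β x =
      iteratedDeriv n (fun y => jacobiWeight α β y * (1 - y ^ 2) ^ n) x := by
  have hw : jacobiWeight α β x ≠ 0 := by
    have hx₁ : 0 < 1 - x := by linarith [hx.2]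
    have hx₂ : 0 < 1 + x := by linarith [hx.1]
    unfold jacobiWeight
    positivity
  rw [rodrigues, mul_comm, ← mul_assoc, mul_one_div_cancel hw, one_mul]

/-- For `α, β > −1` and `0 ≤ k < n`, the function `ψ_n` given by the
Rodrigues formula is orthogonal to `x^k` against the weight `w` on `(−1,1)`:
`∫_{−1}^1 ψ_n(x) x^k w(x) dx = 0`. -/
theorem rodrigues_orthogonal_to_lower_powers
    (α β : ℝ) (hα : -1 < α) (hβ : -1 < β) (n k : ℕ) (hk : k < n) :
    ∫ x in Set.Ioo (-1 : ℝ) 1, rodrigues α β n x * x ^ k * jacobiWeight α β x = 0 := by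
  have hF := (eqOn_jacobiWeight_mul_one_sub_sq_pow α β n).iteratedDeriv_of_isOpen isOpen_Ioo n
  have hintegrand : EqOn (fun x => rodrigues α β n x * x ^ k * jacobiWeight α β x)
      (fun x => (X ^ k : ℝ[X]).eval x * iteratedDeriv n (weightedPoly (α + n) (β + n) 1) x)
      (Ioo (-1) 1) := by
    intro x hx
    beta_reduce
    rw [eval_pow, eval_X, ← hF hx, ← rodrigues_mul_jacobiWeight n hx]
    ring
  obtain ⟨p, hp⟩ := exists_eqOn_iteratedDeriv_weightedPoly (a := α + n) (b := β + n) 1 n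
  have hint : IntegrableOn
      (fun x => (X ^ k : ℝ[X]).eval x * iteratedDeriv n (weightedPoly (α + n) (β + n) 1) x)
      (Ioo (-1) 1) := by
    refine (integrableOn_weightedPoly hα hβ (X ^ k * p)).congr_fun (fun x hx => ?_)
      measurableSet_Ioo
    simp only [hp hx, weightedPoly, add_sub_cancel_right, eval_mul]
    ring
  have hexp : ∀ j < n, (j : ℝ) < α + n ∧ (j : ℝ) < β + n := fun j hj => by
    have : (j : ℝ) + 1 ≤ n := by exact_mod_cast hj
    constructor <;> linarith
  rw [setIntegral_congr_fun measurableSet_Ioo hintegrand]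
  exact setIntegral_Ioo_eval_mul_iteratedDeriv_eq_zero (by norm_num) (by simpa using hk)
    (fun j _ x hx => differentiableAt_iteratedDeriv_weightedPoly 1 j hx)
    (fun j hj => tendsto_iteratedDeriv_weightedPoly_nhdsGT_neg_one (hexp j hj).2 1)
    (fun j hj => tendsto_iteratedDeriv_weightedPoly_nhdsLT_one (hexp j hj).1 1) hint
end

section
/- Let p ≥ 2 and let P_{n,p} denote the Legendre polynomial of degree n in p dimensions defined by the Rodrigues formula. Then P_{n,p} satisfies the differential equation (1−t²)·P″_{n,p}(t) + (1−p)·t·P′_{n,p}(t) + n(n+p−2)·P_{n,p}(t) = 0 for all t ∈ (−1,1). -/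
/-- The falling factorial `(a)_n = a(a−1)⋯(a−n+1)` of a real number `a`. -/
noncomputable def fallingFactorial (a : ℝ) (n : ℕ) : ℝ :=
  ∏ i ∈ Finset.range n, (a - i)

/-- The Legendre polynomial of degree `n` in `p` dimensions, defined on `(−1,1)` by
the Rodrigues formula
`P_{n,p}(t) = ((−1)^n / (2^n (n+(p−3)/2)_n)) (1−t²)^{(3−p)/2} (d/dt)^n (1−t²)^{n+(p−3)/2}`,
where the powers of `1−t²` are real powers. -/
noncomputable def legendreP (p n : ℕ) (t : ℝ) : ℝ :=
  ((-1 : ℝ) ^ n / (2 ^ n * fallingFactorial ((n : ℝ) + ((p : ℝ) - 3) / 2) n)) *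
    (1 - t ^ 2) ^ (((3 : ℝ) - (p : ℝ)) / 2) *
    iteratedDeriv n (fun s : ℝ => (1 - s ^ 2) ^ ((n : ℝ) + ((p : ℝ) - 3) / 2)) t

/-!
Write `w(t) = (1 - t²)^ν` with `ν = n + (p - 3)/2`, so that `P_{n,p} = c (1 - t²)^β w⁽ⁿ⁾` with
`β = (3 - p)/2`. The weight satisfies the first-order equation `(1 - t²) w' + 2νt w = 0`;
differentiating it `k + 1` times gives the second-order equation
`(1 - t²) w⁽ᵏ⁺²⁾ + (2ν - 2 - 2k) t w⁽ᵏ⁺¹⁾ + (k + 1)(2ν - k) w⁽ᵏ⁾ = 0`.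
For `k = n` this is the Legendre equation conjugated by the factor `(1 - t²)^β`: the exponent
`β` is exactly the one for which conjugation produces no `t² / (1 - t²)` term.
-/

open Set

open scoped ContDiff

lemma one_sub_sq_pos {t : ℝ} (ht : t ∈ Ioo (-1 : ℝ) 1) : 0 < 1 - t ^ 2 := by
  nlinarith [ht.1, ht.2]

lemma hasDerivAt_one_sub_sq (t : ℝ) : HasDerivAt (fun s : ℝ => 1 - s ^ 2) (-2 * t) t := by
  simpa using (hasDerivAt_pow 2 t).const_sub 1

lemma hasDerivAt_one_sub_sq_rpow (γ : ℝ) {t : ℝ} (ht : t ∈ Ioo (-1 : ℝ) 1) :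
    HasDerivAt (fun s : ℝ => (1 - s ^ 2) ^ γ) (-2 * t * γ * (1 - t ^ 2) ^ (γ - 1)) t :=
  (hasDerivAt_one_sub_sq t).rpow_const (p := γ) (Or.inl (one_sub_sq_pos ht).ne')

lemma Set.EqOn.eqOn_zero_of_hasDerivAt {U : Set ℝ} (hU : IsOpen U) {G G' : ℝ → ℝ}
    (hG : ∀ t ∈ U, HasDerivAt G (G' t) t) (h0 : EqOn G 0 U) : EqOn G' 0 U := fun t ht => by
  have hloc : G =ᶠ[nhds t] fun _ => 0 := Filter.mem_of_superset (hU.mem_nhds ht) h0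
  exact (hG t ht).unique ((hasDerivAt_const t 0).congr_of_eventuallyEq hloc)

noncomputable def rodriguesDeriv (ν : ℝ) (k : ℕ) : ℝ → ℝ :=
  iteratedDeriv k fun s : ℝ => (1 - s ^ 2) ^ ν

section rodriguesDeriv

variable (ν : ℝ)

lemma rodriguesDeriv_succ (k : ℕ) :
    rodriguesDeriv ν (k + 1) = deriv (rodriguesDeriv ν k) :=
  iteratedDeriv_succ

lemma contDiffOn_rodriguesDeriv (k : ℕ) : ContDiffOn ℝ ∞ (rodriguesDeriv ν k) (Ioo (-1) 1) := by
  induction k with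
  | zero =>
    intro t ht
    exact ((contDiffAt_const.sub (contDiffAt_id.pow 2)).rpow_const_of_ne
      (one_sub_sq_pos ht).ne').contDiffWithinAt
  | succ k ih =>
    rw [rodriguesDeriv_succ]
    exact ((contDiffOn_infty_iff_deriv_of_isOpen isOpen_Ioo).1 ih).2

lemma hasDerivAt_rodriguesDeriv (k : ℕ) {t : ℝ} (ht : t ∈ Ioo (-1 : ℝ) 1) :
    HasDerivAt (rodriguesDeriv ν k) (rodriguesDeriv ν (k + 1) t) t := by
  have hdiff := ((contDiffOn_rodriguesDeriv ν k).differentiableOn (by simp)).differentiableAt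
    (isOpen_Ioo.mem_nhds ht)
  rw [rodriguesDeriv_succ]
  exact hdiff.hasDerivAt

lemma one_sub_sq_mul_rodriguesDeriv_one :
    EqOn (fun t => (1 - t ^ 2) * rodriguesDeriv ν 1 t + 2 * ν * t * rodriguesDeriv ν 0 t) 0
      (Ioo (-1) 1) := fun t ht => by
  have hw := hasDerivAt_one_sub_sq_rpow ν ht
  simp only [rodriguesDeriv, iteratedDeriv_one, iteratedDeriv_zero, hw.deriv, Pi.zero_apply]
  have hu := (one_sub_sq_pos ht).ne'
  rw [Real.rpow_sub_one hu]
  field_simp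
  ring

lemma rodriguesDeriv_ode_zero :
    EqOn (fun t => (1 - t ^ 2) * rodriguesDeriv ν 2 t + (2 * ν - 2) * t * rodriguesDeriv ν 1 t
      + 2 * ν * rodriguesDeriv ν 0 t) 0 (Ioo (-1) 1) := by
  refine (one_sub_sq_mul_rodriguesDeriv_one ν).eqOn_zero_of_hasDerivAt isOpen_Ioo fun t ht => ?_
  refine (((hasDerivAt_one_sub_sq t).fun_mul (hasDerivAt_rodriguesDeriv ν 1 ht)).fun_add
    (((hasDerivAt_id' t).const_mul (2 * ν)).fun_mul
      (hasDerivAt_rodriguesDeriv ν 0 ht))).congr_deriv ?_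
  ring

lemma rodriguesDeriv_ode_succ {k : ℕ} {a b : ℝ}
    (h : EqOn (fun t => (1 - t ^ 2) * rodriguesDeriv ν (k + 2) t
      + a * t * rodriguesDeriv ν (k + 1) t + b * rodriguesDeriv ν k t) 0 (Ioo (-1) 1)) :
    EqOn (fun t => (1 - t ^ 2) * rodriguesDeriv ν (k + 3) t
      + (a - 2) * t * rodriguesDeriv ν (k + 2) t + (a + b) * rodriguesDeriv ν (k + 1) t) 0
      (Ioo (-1) 1) := by
  refine h.eqOn_zero_of_hasDerivAt isOpen_Ioo fun t ht => ?_
  refine ((((hasDerivAt_one_sub_sq t).fun_mul (hasDerivAt_rodriguesDeriv ν (k + 2) ht)).fun_add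
    (((hasDerivAt_id' t).const_mul a).fun_mul (hasDerivAt_rodriguesDeriv ν (k + 1) ht))).fun_add
    ((hasDerivAt_rodriguesDeriv ν k ht).const_mul b)).congr_deriv ?_
  ring

lemma rodriguesDeriv_ode (k : ℕ) :
    EqOn (fun t => (1 - t ^ 2) * rodriguesDeriv ν (k + 2) t
      + (2 * ν - 2 - 2 * k) * t * rodriguesDeriv ν (k + 1) t
      + (k + 1) * (2 * ν - k) * rodriguesDeriv ν k t) 0 (Ioo (-1) 1) := by
  induction k with
  | zero => simpa using rodriguesDeriv_ode_zero ν
  | succ k ih =>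
    convert rodriguesDeriv_ode_succ ν ih using 4 <;> push_cast <;> ring

end rodriguesDeriv

lemma deriv_deriv_one_sub_sq_rpow_mul (β : ℝ) {D D' D'' : ℝ → ℝ}
    (hD : ∀ s ∈ Ioo (-1 : ℝ) 1, HasDerivAt D (D' s) s)
    (hD' : ∀ s ∈ Ioo (-1 : ℝ) 1, HasDerivAt D' (D'' s) s) {t : ℝ} (ht : t ∈ Ioo (-1 : ℝ) 1) :
    (1 - t ^ 2) * deriv (deriv fun s => (1 - s ^ 2) ^ β * D s) t
      + (2 * β - 2) * t * deriv (fun s => (1 - s ^ 2) ^ β * D s) t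
      = (1 - t ^ 2) ^ β * ((1 - t ^ 2) * D'' t - (2 * β + 2) * t * D' t - 2 * β * D t) := by
  have hP : ∀ s ∈ Ioo (-1 : ℝ) 1, HasDerivAt (fun s => (1 - s ^ 2) ^ β * D s)
      (-2 * s * β * (1 - s ^ 2) ^ (β - 1) * D s + (1 - s ^ 2) ^ β * D' s) s :=
    fun s hs => (hasDerivAt_one_sub_sq_rpow β hs).fun_mul (hD s hs)
  have hderiv : deriv (fun s => (1 - s ^ 2) ^ β * D s) =ᶠ[nhds t]
      fun s => -2 * s * β * (1 - s ^ 2) ^ (β - 1) * D s + (1 - s ^ 2) ^ β * D' s :=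
    Filter.eventually_of_mem (isOpen_Ioo.mem_nhds ht) fun s hs => (hP s hs).deriv
  have hP' := (((((hasDerivAt_id' t).const_mul (-2)).mul_const β).fun_mul
    (hasDerivAt_one_sub_sq_rpow (β - 1) ht)).fun_mul (hD t ht)).fun_add
    ((hasDerivAt_one_sub_sq_rpow β ht).fun_mul (hD' t ht))
  have hu := (one_sub_sq_pos ht).ne'
  rw [hderiv.deriv_eq, hP'.deriv, (hP t ht).deriv, Real.rpow_sub_one hu (β - 1),
    Real.rpow_sub_one hu β]
  field_simp
  ring

theorem legendreP_differential_equation_general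
    (p : ℕ) (n : ℕ) (t : ℝ) (ht : t ∈ Set.Ioo (-1 : ℝ) 1) :
    (1 - t ^ 2) * deriv (deriv (legendreP p n)) t
        + (1 - (p : ℝ)) * t * deriv (legendreP p n) t
        + (n : ℝ) * ((n : ℝ) + (p : ℝ) - 2) * legendreP p n t = 0 := by
  set ν : ℝ := n + ((p : ℝ) - 3) / 2
  set β : ℝ := (3 - (p : ℝ)) / 2
  set c : ℝ := (-1) ^ n / (2 ^ n * fallingFactorial ν n)
  have hP : legendreP p n = fun s => (1 - s ^ 2) ^ β * (c * rodriguesDeriv ν n s) :=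
    funext fun s => by rw [legendreP, rodriguesDeriv]; ring
  have hconj := deriv_deriv_one_sub_sq_rpow_mul β
    (fun s hs => (hasDerivAt_rodriguesDeriv ν n hs).const_mul c)
    (fun s hs => (hasDerivAt_rodriguesDeriv ν (n + 1) hs).const_mul c) ht
  have hode : _ = (0 : ℝ) := rodriguesDeriv_ode ν n ht
  rw [hP]
  linear_combination hconj + c * (1 - t ^ 2) ^ β * hode

/-- The Legendre polynomial `P_{n,p}` in `p` dimensions satisfies the
Legendre differential equation
`(1−t²) P″(t) + (1−p) t P′(t) + n(n+p−2) P(t) = 0` on `(−1,1)`. -/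
theorem legendreP_differential_equation
    (p : ℕ) (hp : 2 ≤ p) (n : ℕ) (t : ℝ) (ht : t ∈ Set.Ioo (-1 : ℝ) 1) :
    (1 - t ^ 2) * deriv (deriv (legendreP p n)) t
        + (1 - (p : ℝ)) * t * deriv (legendreP p n) t
        + (n : ℝ) * ((n : ℝ) + (p : ℝ) - 2) * legendreP p n t = 0 :=
  legendreP_differential_equation_general p n t ht
end

section
/- Let p ≥ 2 and let P_{n,p} denote the Legendre polynomial of degree n in p dimensions defined by the Rodrigues formula. Then for every n ≥ 1 and all t ∈ (−1,1), (n+p−2)·P_{n+1,p}(t) − (2n+p−2)·t·P_{n,p}(t) + n·P_{n−1,p}(t) = 0. -/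
open Finset Real

lemma fallingFactorial_add (x : ℝ) (k m : ℕ) :
    fallingFactorial x (k + m) = fallingFactorial x k * fallingFactorial (x - k) m := by
  simp only [fallingFactorial, prod_range_add, Nat.cast_add, sub_add_eq_sub_sub]

lemma fallingFactorial_add_one_succ (x : ℝ) (k : ℕ) :
    fallingFactorial (x + 1) (k + 1) = (x + 1) * fallingFactorial x k := by
  rw [add_comm k, fallingFactorial_add]
  simp [fallingFactorial]

lemma fallingFactorial_natCast_add_mul (β : ℝ) (i j : ℕ) :
    fallingFactorial ((i + j : ℕ) + β) i * fallingFactorial (j + β) j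
      = fallingFactorial ((i + j : ℕ) + β) (i + j) := by
  rw [fallingFactorial_add]
  congr 2
  push_cast
  ring

lemma fallingFactorial_natCast_add_self_pos {β : ℝ} (hβ : -1 < β) (n : ℕ) :
    0 < fallingFactorial (n + β) n := by
  refine prod_pos fun i hi => ?_
  have : (i : ℝ) + 1 ≤ n := by exact_mod_cast mem_range.mp hi
  linarith

lemma fallingFactorial_eq_descPochhammer_eval (x : ℝ) (k : ℕ) :
    fallingFactorial x k = (descPochhammer ℝ k).eval x :=
  (descPochhammer_eval_eq_prod_range k x).symm

lemma rpow_natCast_add_sub_mul_rpow_neg {u : ℝ} (hu : 0 < u) (β : ℝ) {k n : ℕ} (hk : k ≤ n) :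
    u ^ ((n : ℝ) + β - k) * u ^ (-β) = u ^ (n - k) := by
  rw [← rpow_add hu, ← rpow_natCast, Nat.cast_sub hk]
  ring_nf

lemma iteratedDeriv_one_add_rpow (b t : ℝ) (k : ℕ) :
    iteratedDeriv k (fun s => (1 + s) ^ b) t = fallingFactorial b k * (1 + t) ^ (b - k) := by
  simp only [iteratedDeriv_comp_const_add k (fun s => s ^ b), iteratedDeriv_eq_iterate,
    iter_deriv_rpow_const, fallingFactorial_eq_descPochhammer_eval]

lemma iteratedDeriv_one_sub_rpow (a t : ℝ) (k : ℕ) :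
    iteratedDeriv k (fun s => (1 - s) ^ a) t
      = (-1) ^ k * fallingFactorial a k * (1 - t) ^ (a - k) := by
  simp only [iteratedDeriv_comp_const_sub k (fun s => s ^ a), smul_eq_mul,
    iteratedDeriv_eq_iterate, iter_deriv_rpow_const, fallingFactorial_eq_descPochhammer_eval,
    mul_assoc]

lemma iteratedDeriv_one_sub_sq_rpow (c : ℝ) (n : ℕ) {t : ℝ} (ht : t ∈ Set.Ioo (-1 : ℝ) 1) :
    iteratedDeriv n (fun s => (1 - s ^ 2) ^ c) t
      = ∑ ij ∈ antidiagonal n, (n.choose ij.1 : ℝ)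
          * ((-1) ^ ij.1 * fallingFactorial c ij.1 * (1 - t) ^ (c - ij.1))
          * (fallingFactorial c ij.2 * (1 + t) ^ (c - ij.2)) := by
  have hfactor :
      (fun s : ℝ => (1 - s ^ 2) ^ c) =ᶠ[nhds t] fun s => (1 - s) ^ c * (1 + s) ^ c := by
    filter_upwards [isOpen_Ioo.mem_nhds ht] with s hs
    rw [← mul_rpow (by linarith [hs.2]) (by linarith [hs.1])]
    ring_nf
  have hsub : ContDiffAt ℝ n (fun s : ℝ => (1 - s) ^ c) t :=
    (contDiffAt_rpow_const_of_ne (by linarith [ht.2])).comp t (contDiffAt_const.sub contDiffAt_id)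
  have hadd : ContDiffAt ℝ n (fun s : ℝ => (1 + s) ^ c) t :=
    (contDiffAt_rpow_const_of_ne (by linarith [ht.1])).comp t (contDiffAt_const.add contDiffAt_id)
  rw [hfactor.iteratedDeriv_eq, iteratedDeriv_fun_mul hsub hadd,
    Nat.sum_antidiagonal_eq_sum_range_succ (fun i j => (n.choose i : ℝ)
      * ((-1) ^ i * fallingFactorial c i * (1 - t) ^ (c - i))
      * (fallingFactorial c j * (1 + t) ^ (c - j)))]
  simp only [iteratedDeriv_one_sub_rpow, iteratedDeriv_one_add_rpow]

-- `fallingFactorial (i + β) i` is the rising factorial `(β + 1)⋯(β + i)`.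
noncomputable def gegenbauerCoeff (β : ℝ) (i : ℕ) : ℝ :=
  ((i.factorial : ℝ) * fallingFactorial (i + β) i)⁻¹

noncomputable def gegenbauerSum (β : ℝ) (w : ℝ → ℝ → ℝ) (n : ℕ) (x y : ℝ) : ℝ :=
  ∑ ij ∈ antidiagonal n,
    w ij.1 ij.2 * (gegenbauerCoeff β ij.1 * gegenbauerCoeff β ij.2 * y ^ ij.1 * x ^ ij.2)

lemma inv_gegenbauerCoeff_succ (β : ℝ) (i : ℕ) :
    (gegenbauerCoeff β (i + 1))⁻¹ = (i + 1) * (i + 1 + β) * (gegenbauerCoeff β i)⁻¹ := by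
  simp only [gegenbauerCoeff, inv_inv, Nat.factorial_succ, Nat.cast_mul, Nat.cast_succ]
  rw [show ((i : ℝ) + 1 + β) = (i + β) + 1 by ring, fallingFactorial_add_one_succ]
  ring

lemma gegenbauerCoeff_eq_mul_succ {β : ℝ} (hβ : -1 < β) (i : ℕ) :
    gegenbauerCoeff β i = (i + 1) * (i + 1 + β) * gegenbauerCoeff β (i + 1) := by
  have hi : ((i : ℝ) + 1) * (i + 1 + β) ≠ 0 := by
    have : (0 : ℝ) ≤ i := i.cast_nonneg
    apply mul_ne_zero <;> linarith
  rw [← inv_inv (gegenbauerCoeff β (i + 1)), inv_gegenbauerCoeff_succ, mul_inv, ← mul_assoc,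
    mul_inv_cancel₀ hi, one_mul, inv_inv]

-- The weight `i (i + β)` vanishes at `i = 0`, so no boundary term appears.
lemma mul_gegenbauerSum_shift_fst {β : ℝ} (hβ : -1 < β) (w : ℝ → ℝ → ℝ) (n : ℕ) (x y : ℝ) :
    y * gegenbauerSum β w n x y
      = gegenbauerSum β (fun i j => i * (i + β) * w (i - 1) j) (n + 1) x y := by
  rw [gegenbauerSum, gegenbauerSum, Nat.sum_antidiagonal_succ, mul_sum]
  simp only [Nat.cast_zero, zero_mul, zero_add, Nat.cast_add_one, add_sub_cancel_right]
  refine sum_congr rfl fun ij _ => ?_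
  rw [gegenbauerCoeff_eq_mul_succ hβ ij.1]
  ring

lemma mul_gegenbauerSum_shift_snd {β : ℝ} (hβ : -1 < β) (w : ℝ → ℝ → ℝ) (n : ℕ) (x y : ℝ) :
    x * gegenbauerSum β w n x y
      = gegenbauerSum β (fun i j => j * (j + β) * w i (j - 1)) (n + 1) x y := by
  rw [gegenbauerSum, gegenbauerSum, Nat.sum_antidiagonal_succ', mul_sum]
  simp only [Nat.cast_zero, zero_mul, zero_add, Nat.cast_add_one, add_sub_cancel_right]
  refine sum_congr rfl fun ij _ => ?_
  rw [gegenbauerCoeff_eq_mul_succ hβ ij.2]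
  ring

lemma gegenbauerSum_recurrence {β : ℝ} (hβ : -1 < β) (m : ℕ) (x y : ℝ) :
    (m + 2 + 2 * β) * (m + 2) * (m + 2 + β) * (m + 1 + β)
        * gegenbauerSum β (fun _ _ => 1) (m + 2) x y
      - (2 * m + 2 * β + 3) * (m + 1 + β) * (x + y) * gegenbauerSum β (fun _ _ => 1) (m + 1) x y
      + (y - x) ^ 2 * gegenbauerSum β (fun _ _ => 1) m x y = 0 := by
  set S := gegenbauerSum β (fun _ _ => 1)
  suffices (m + 2 + 2 * β) * (m + 2) * (m + 2 + β) * (m + 1 + β) * S (m + 2) x y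
      - (2 * m + 2 * β + 3) * (m + 1 + β) * (x * S (m + 1) x y + y * S (m + 1) x y)
      + (y * (y * S m x y) - 2 * (x * (y * S m x y)) + x * (x * S m x y)) = 0 by
    linear_combination this
  simp only [S, mul_gegenbauerSum_shift_fst hβ, mul_gegenbauerSum_shift_snd hβ]
  simp only [gegenbauerSum, mul_sum, ← sum_add_distrib, ← sum_sub_distrib]
  refine sum_eq_zero fun ij hij => ?_
  have hm : (m : ℝ) = ij.1 + ij.2 - 2 := by
    rw [HasAntidiagonal.mem_antidiagonal] at hij
    rw [eq_sub_iff_add_eq]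
    exact_mod_cast hij.symm
  rw [hm]
  ring

lemma neg_one_lt_half_sub_three {p : ℕ} (hp : 2 ≤ p) : -1 < ((p : ℝ) - 3) / 2 := by
  have : (2 : ℝ) ≤ p := by exact_mod_cast hp
  linarith

lemma legendreP_eq_gegenbauerSum {p : ℕ} (hp : 2 ≤ p) (n : ℕ) {t : ℝ}
    (ht : t ∈ Set.Ioo (-1 : ℝ) 1) :
    legendreP p n t = (gegenbauerCoeff (((p : ℝ) - 3) / 2) n)⁻¹
      * gegenbauerSum (((p : ℝ) - 3) / 2) (fun _ _ => 1) n ((t - 1) / 2) ((t + 1) / 2) := by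
  have hβ := neg_one_lt_half_sub_three hp
  have hweight : (1 - t ^ 2) ^ (((3 : ℝ) - p) / 2)
      = (1 - t) ^ (-(((p : ℝ) - 3) / 2)) * (1 + t) ^ (-(((p : ℝ) - 3) / 2)) := by
    rw [← mul_rpow (by linarith [ht.2]) (by linarith [ht.1])]
    ring_nf
  set β := ((p : ℝ) - 3) / 2
  rw [legendreP, iteratedDeriv_one_sub_sq_rpow _ _ ht, hweight, gegenbauerSum, mul_sum, mul_sum]
  refine sum_congr rfl fun ⟨i, j⟩ hij => ?_
  rw [HasAntidiagonal.mem_antidiagonal] at hij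
  subst hij
  have hsign : (-1 : ℝ) ^ (i + j) * (-1) ^ i * (1 - t) ^ j = (t - 1) ^ j := by
    rw [pow_add, mul_right_comm ((-1 : ℝ) ^ i), ← mul_pow, neg_one_mul, neg_neg, one_pow,
      one_mul, ← mul_pow, neg_one_mul, neg_sub]
  have hchoose : ((i + j).choose i : ℝ) * i.factorial * j.factorial = (i + j).factorial := by
    rw [Nat.choose_symm_add]
    exact_mod_cast Nat.add_choose_mul_factorial_mul_factorial i j
  have hff_i := eq_div_of_mul_eq (fallingFactorial_natCast_add_self_pos hβ j).ne'
    (fallingFactorial_natCast_add_mul β i j)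
  have hff_j := eq_div_of_mul_eq (fallingFactorial_natCast_add_self_pos hβ i).ne'
    (fallingFactorial_natCast_add_mul β j i)
  rw [add_comm j i] at hff_j
  calc _ = ((i + j).choose i : ℝ)
        * fallingFactorial ((i + j : ℕ) + β) i * fallingFactorial ((i + j : ℕ) + β) j
        / (2 ^ (i + j) * fallingFactorial ((i + j : ℕ) + β) (i + j))
        * ((-1) ^ (i + j) * (-1) ^ i * ((1 - t) ^ ((i + j : ℕ) + β - i) * (1 - t) ^ (-β)))
        * ((1 + t) ^ ((i + j : ℕ) + β - j) * (1 + t) ^ (-β)) := by ring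
    _ = _ := by
      rw [rpow_natCast_add_sub_mul_rpow_neg (by linarith [ht.2]) β (Nat.le_add_right i j),
        rpow_natCast_add_sub_mul_rpow_neg (by linarith [ht.1]) β (Nat.le_add_left j i),
        Nat.add_sub_cancel_left, Nat.add_sub_cancel, hsign, hff_i, hff_j]
      simp only [gegenbauerCoeff, inv_inv, ← hchoose, div_pow]
      field_simp
      ring

/-- The Legendre polynomials in `p` dimensions satisfy the recurrence
`(n+p−2) P_{n+1,p}(t) − (2n+p−2) t P_{n,p}(t) + n P_{n−1,p}(t) = 0` for `n ≥ 1`. -/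
theorem legendreP_recurrence
    (p : ℕ) (hp : 2 ≤ p) (n : ℕ) (hn : 1 ≤ n) (t : ℝ) (ht : t ∈ Set.Ioo (-1 : ℝ) 1) :
    ((n : ℝ) + (p : ℝ) - 2) * legendreP p (n + 1) t
        - (2 * (n : ℝ) + (p : ℝ) - 2) * t * legendreP p n t
        + (n : ℝ) * legendreP p (n - 1) t = 0 := by
  obtain ⟨m, rfl⟩ : ∃ m, n = m + 1 := ⟨n - 1, by omega⟩
  have hβ := neg_one_lt_half_sub_three hp
  rw [Nat.add_sub_cancel, legendreP_eq_gegenbauerSum hp _ ht, legendreP_eq_gegenbauerSum hp _ ht,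
    legendreP_eq_gegenbauerSum hp _ ht, inv_gegenbauerCoeff_succ, inv_gegenbauerCoeff_succ]
  have key := gegenbauerSum_recurrence hβ m ((t - 1) / 2) ((t + 1) / 2)
  push_cast
  linear_combination (m + 1) * (gegenbauerCoeff (((p : ℝ) - 3) / 2) m)⁻¹ * key
end
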